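/- Let p, q, r be real numbers with p + 1 > 0 and r > q + 1 > 0. Then there exists a constant C > 0, depending only on p, q, r, such that for all u ∈ [0,1), ∫₀¹ tᵖ(1−t)^q / (1−ut)^r dt ≤ C·(1−u)^{q+1−r}. -/

import Mathlib

/-!
For `t, u ∈ [0, 1]` the denominator satisfies `1 - u t ≥ max (1 - t) (1 - u)`. On `t ≤ 1/2`
this leaves the integrable singularity `t ^ p`; on `t ≥ 1/2` it leaves, after `s = 1 - t` and
with `ε = 1 - u`, the model integral `∫₀¹ s ^ q / max s ε ^ r`. Split at `s = ε`, its two parts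
are `ε ^ (q + 1 - r) / (q + 1)` and `∫_ε^1 s ^ (q - r) ≤ ε ^ (q + 1 - r) / (r - q - 1)`.
-/

open MeasureTheory

theorem max_one_sub_le_one_sub_mul {t u : ℝ} (ht0 : 0 ≤ t) (ht1 : t ≤ 1) (hu0 : 0 ≤ u)
    (hu1 : u ≤ 1) : max (1 - t) (1 - u) ≤ 1 - u * t :=
  max_le (by nlinarith) (by nlinarith)

theorem Real.rpow_le_two_rpow_abs {x : ℝ} (s : ℝ) (hx0 : 1 / 2 ≤ x) (hx1 : x ≤ 1) :
    x ^ s ≤ 2 ^ |s| := by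
  rcases le_or_gt 0 s with hs | hs
  · exact (Real.rpow_le_one (by linarith) hx1 hs).trans
      (Real.one_le_rpow one_le_two (abs_nonneg s))
  · calc x ^ s ≤ (1 / 2) ^ s := Real.rpow_le_rpow_of_nonpos (by norm_num) hx0 hs.le
      _ = 2 ^ |s| := by
        rw [abs_of_neg hs, one_div, Real.inv_rpow zero_le_two, Real.rpow_neg zero_le_two]

theorem intervalIntegrable_rpow_div_max_rpow {q ε : ℝ} (r : ℝ) {a b : ℝ} (hq : -1 < q)
    (hε : 0 < ε) :
    IntervalIntegrable (fun s => s ^ q / max s ε ^ r) volume a b := by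
  simp only [div_eq_mul_inv]
  refine (intervalIntegral.intervalIntegrable_rpow' hq).mul_continuousOn ?_
  have hpos : ∀ s, 0 < max s ε := fun s => lt_max_of_lt_right hε
  exact ((continuous_id.max continuous_const).rpow_const fun s => Or.inl (hpos s).ne'
    ).continuousOn.inv₀ fun s _ => (Real.rpow_pos_of_pos (hpos s) r).ne'

theorem integral_rpow_div_max_rpow_le {q r ε : ℝ} (hq : -1 < q) (hr : q + 1 < r) (hε0 : 0 < ε)
    (hε1 : ε ≤ 1) :
    ∫ s in (0 : ℝ)..1, s ^ q / max s ε ^ r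
      ≤ (1 / (q + 1) + 1 / (r - q - 1)) * ε ^ (q + 1 - r) := by
  have hint : ∀ a b, IntervalIntegrable (fun s => s ^ q / max s ε ^ r) volume a b :=
    fun _ _ => intervalIntegrable_rpow_div_max_rpow r hq hε0
  have hnear : ∫ s in (0 : ℝ)..ε, s ^ q / max s ε ^ r = ε ^ (q + 1 - r) / (q + 1) := by
    rw [intervalIntegral.integral_congr (g := fun s => s ^ q / ε ^ r),
      intervalIntegral.integral_div, integral_rpow (Or.inl hq), Real.zero_rpow (by linarith),
      Real.rpow_sub hε0]
    · ring
    · intro s hs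
      rw [Set.uIcc_of_le hε0.le] at hs
      simp only [max_eq_right hs.2]
  have hfar : ∫ s in ε..1, s ^ q / max s ε ^ r = (ε ^ (q + 1 - r) - 1) / (r - q - 1) := by
    rw [intervalIntegral.integral_congr (g := fun s => s ^ (q - r)),
      integral_rpow (Or.inr ⟨by linarith, ?_⟩), Real.one_rpow]
    · rw [show q - r + 1 = -(r - q - 1) by ring, div_neg, ← neg_div, neg_sub]; ring_nf
    · rw [Set.uIcc_of_le hε1]; exact fun h => hε0.not_ge h.1
    · intro s hs
      rw [Set.uIcc_of_le hε1] at hs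
      simp only [max_eq_left hs.1, Real.rpow_sub (hε0.trans_le hs.1)]
  rw [← intervalIntegral.integral_add_adjacent_intervals (hint 0 ε) (hint ε 1), hnear, hfar,
    add_mul, one_div_mul_eq_div, one_div_mul_eq_div]
  have : 0 < r - q - 1 := by linarith
  gcongr
  exact sub_le_self _ zero_le_one

theorem rpow_mul_one_sub_rpow_div_le_add {p q r t u : ℝ} (hr : 0 ≤ r) (ht0 : 0 < t)
    (ht1 : t < 1) (hu0 : 0 ≤ u) (hu1 : u ≤ 1) :
    t ^ p * (1 - t) ^ q / (1 - u * t) ^ r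
      ≤ 2 ^ |q - r| * t ^ p + 2 ^ |p| * ((1 - t) ^ q / max (1 - t) (1 - u) ^ r) := by
  have h1t : 0 < 1 - t := by linarith
  have hmax : 0 < max (1 - t) (1 - u) := lt_max_of_lt_left h1t
  have htp : 0 ≤ t ^ p := Real.rpow_nonneg ht0.le p
  have hg : 0 ≤ (1 - t) ^ q / max (1 - t) (1 - u) ^ r := by positivity
  have hden : t ^ p * (1 - t) ^ q / (1 - u * t) ^ r
      ≤ t ^ p * ((1 - t) ^ q / max (1 - t) (1 - u) ^ r) := by
    rw [← mul_div_assoc]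
    gcongr
    exact max_one_sub_le_one_sub_mul ht0.le ht1.le hu0 hu1
  rcases le_total t (1 / 2) with ht | ht
  · have : (1 - t) ^ q / max (1 - t) (1 - u) ^ r ≤ 2 ^ |q - r| :=
      calc (1 - t) ^ q / max (1 - t) (1 - u) ^ r ≤ (1 - t) ^ q / (1 - t) ^ r := by
            gcongr; exact le_max_left _ _
        _ = (1 - t) ^ (q - r) := (Real.rpow_sub h1t q r).symm
        _ ≤ 2 ^ |q - r| := Real.rpow_le_two_rpow_abs _ (by linarith) (by linarith)
    nlinarith [mul_le_mul_of_nonneg_left this htp, Real.rpow_pos_of_pos two_pos |p|]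
  · nlinarith [mul_le_mul_of_nonneg_right (Real.rpow_le_two_rpow_abs p ht ht1.le) hg,
      Real.rpow_pos_of_pos two_pos |q - r|]

theorem setIntegral_Ioo_le_add_integral_rpow_div_max_rpow {p q r u : ℝ} (hp : -1 < p)
    (hq : -1 < q) (hr : 0 ≤ r) (hu0 : 0 ≤ u) (hu1 : u < 1) :
    ∫ t in Set.Ioo (0 : ℝ) 1, t ^ p * (1 - t) ^ q / (1 - u * t) ^ r
      ≤ 2 ^ |q - r| * (∫ t in (0 : ℝ)..1, t ^ p)
        + 2 ^ |p| * ∫ s in (0 : ℝ)..1, s ^ q / max s (1 - u) ^ r := by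
  set g : ℝ → ℝ := fun s => s ^ q / max s (1 - u) ^ r
  have hpow : IntervalIntegrable (fun t => t ^ p) volume 0 1 :=
    intervalIntegral.intervalIntegrable_rpow' hp
  have hreflect : IntervalIntegrable (fun t => g (1 - t)) volume 0 1 := by
    simpa using ((intervalIntegrable_rpow_div_max_rpow r (a := 0) (b := 1) hq
      (sub_pos.2 hu1)).comp_sub_left 1).symm
  have hmajorant := (hpow.const_mul (2 ^ |q - r|)).add (hreflect.const_mul (2 ^ |p|))
  calc ∫ t in Set.Ioo (0 : ℝ) 1, t ^ p * (1 - t) ^ q / (1 - u * t) ^ r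
      ≤ ∫ t in Set.Ioo (0 : ℝ) 1, (2 ^ |q - r| * t ^ p + 2 ^ |p| * g (1 - t)) := by
        refine integral_mono_of_nonneg (ae_restrict_of_forall_mem measurableSet_Ioo fun t ht => ?_)
          ((intervalIntegrable_iff_integrableOn_Ioo_of_le zero_le_one).1 hmajorant)
          (ae_restrict_of_forall_mem measurableSet_Ioo fun t ht => ?_)
        · have hut : 0 ≤ 1 - u * t := by nlinarith [ht.1, ht.2]
          exact div_nonneg (mul_nonneg (Real.rpow_nonneg ht.1.le p)
            (Real.rpow_nonneg (by linarith [ht.2]) q)) (Real.rpow_nonneg hut r)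
        · exact rpow_mul_one_sub_rpow_div_le_add hr ht.1 ht.2 hu0 hu1.le
    _ = 2 ^ |q - r| * (∫ t in (0 : ℝ)..1, t ^ p) + 2 ^ |p| * ∫ s in (0 : ℝ)..1, g s := by
        rw [← integral_Ioc_eq_integral_Ioo, ← intervalIntegral.integral_of_le zero_le_one,
          intervalIntegral.integral_add (hpow.const_mul _) (hreflect.const_mul _),
          intervalIntegral.integral_const_mul, intervalIntegral.integral_const_mul,
          intervalIntegral.integral_comp_sub_left g 1, sub_self, sub_zero]

theorem hypergeometric_integral_bound (p q r : ℝ) (hp : 0 < p + 1) (hq : 0 < q + 1)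
    (hr : q + 1 < r) :
    ∃ C : ℝ, 0 < C ∧ ∀ u : ℝ, 0 ≤ u → u < 1 →
      (∫ t in Set.Ioo (0 : ℝ) 1, t ^ p * (1 - t) ^ q / (1 - u * t) ^ r)
        ≤ C * (1 - u) ^ (q + 1 - r) := by
  have hrq : 0 < r - q - 1 := by linarith
  refine ⟨2 ^ |q - r| / (p + 1) + 2 ^ |p| * (1 / (q + 1) + 1 / (r - q - 1)), by positivity, ?_⟩
  intro u hu0 hu1
  have hone : 1 ≤ (1 - u) ^ (q + 1 - r) :=
    Real.one_le_rpow_of_pos_of_le_one_of_nonpos (by linarith) (by linarith) (by linarith)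
  calc (∫ t in Set.Ioo (0 : ℝ) 1, t ^ p * (1 - t) ^ q / (1 - u * t) ^ r)
      ≤ 2 ^ |q - r| * (∫ t in (0 : ℝ)..1, t ^ p)
        + 2 ^ |p| * ∫ s in (0 : ℝ)..1, s ^ q / max s (1 - u) ^ r :=
        setIntegral_Ioo_le_add_integral_rpow_div_max_rpow (by linarith) (by linarith)
          (by linarith) hu0 hu1
    _ ≤ 2 ^ |q - r| / (p + 1)
        + 2 ^ |p| * ((1 / (q + 1) + 1 / (r - q - 1)) * (1 - u) ^ (q + 1 - r)) := by
        rw [integral_rpow (Or.inl (by linarith)), Real.one_rpow, Real.zero_rpow (by linarith),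
          sub_zero, mul_one_div]
        gcongr
        exact integral_rpow_div_max_rpow_le (by linarith) hr (by linarith) (by linarith)
    _ ≤ _ := by
        linarith [le_mul_of_one_le_right (by positivity : (0 : ℝ) ≤ 2 ^ |q - r| / (p + 1)) hone]
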